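/- arXiv:2310.11408 — 3 statements merged into one kernel-verified Lean document; each statement's English description precedes it below -/
import Mathlib

section
/- Fix an integer k ≥ 1. For an odd positive integer q and integers m₁, m₂, n₃, n₃′, define 𝔖₀(q) = q² · ∑*_{a₁ mod q} ∑*_{a₂ mod q} ∑*_{α mod q} e( ( α(ā₁ − ā₂) + \overline{4}(m₁² + m₂²)(ā₂ − ā₁) + n₃′^k a₂ − n₃^k a₁ ) / q ), where ∑* means the sum runs over residues coprime to q, ā_i is a multiplicative inverse of a_i modulo q, and \overline{4} is a multiplicative inverse of 4 modulo q. Then for every ε > 0 there exists a constant C > 0, independent of q, m₁, m₂, n₃, n₃′, such that |𝔖₀(q)| ≤ C · q^{4 + ε}. -/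
/-- `e x = exp(2πix)`. -/
noncomputable def e (x : ℝ) : ℂ := Complex.exp (2 * Real.pi * Complex.I * x)

/-- A canonical multiplicative inverse modulo `q` of a natural number `a`. -/
def modInv (q a : ℕ) : ℤ := (((a : ZMod q)⁻¹).val : ℤ)
lemma e_add (x y : ℝ) : e (x + y) = e x * e y := by
  rw [e, e, e, ← Complex.exp_add]; push_cast; ring_nf

lemma e_conj (x : ℝ) : (starRingEnd ℂ) (e x) = e (-x) := by
  rw [e, e, ← Complex.exp_conj]
  congr 1
  simp only [map_mul, Complex.conj_I, Complex.conj_ofReal, map_ofNat]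
  push_cast; ring

lemma e_norm (x : ℝ) : ‖e x‖ = 1 := by
  rw [e, Complex.norm_exp]
  convert Real.exp_zero using 2
  simp [Complex.mul_re, Complex.I_re, Complex.I_im]

lemma e_int (n : ℤ) : e n = 1 := by
  rw [e]
  have : 2 * (Real.pi:ℂ) * Complex.I * (n:ℝ) = n * (2 * Real.pi * Complex.I) := by push_cast; ring
  rw [this, Complex.exp_int_mul_two_pi_mul_I]

lemma sum_e (q : ℕ) (hq : 0 < q) (d : ℤ) :
    ∑ α ∈ Finset.range q, e ((α : ℝ) * (d : ℝ) / q) =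
      if (q : ℤ) ∣ d then (q : ℂ) else 0 := by
  have hq0 : (q : ℝ) ≠ 0 := Nat.cast_ne_zero.mpr hq.ne'
  have hz : ∀ α : ℕ, e ((α : ℝ) * (d : ℝ) / q) = (e ((d : ℝ) / q)) ^ α := by
    intro α
    rw [e, e, ← Complex.exp_nat_mul]
    congr 1; push_cast; ring
  simp_rw [hz]
  by_cases h : (q : ℤ) ∣ d
  · obtain ⟨m, hm⟩ := h
    have harg : ((d : ℝ)) / q = ((m : ℤ) : ℝ) := by rw [hm]; push_cast; field_simp
    rw [harg, e_int]
    simp [hm, dvd_mul_right]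
  · have hz1 : e ((d : ℝ) / q) ≠ 1 := by
      rw [e, Ne, Complex.exp_eq_one_iff]
      rintro ⟨n, hn⟩
      apply h
      have hpi : (2 * (Real.pi:ℂ) * Complex.I) ≠ 0 := by
        simp [Real.pi_ne_zero, Complex.I_ne_zero]
      push_cast at hn
      have h2 : (d:ℂ) / q = n := by
        apply mul_left_cancel₀ hpi
        rw [hn]; ring
      have hq0c : (q : ℂ) ≠ 0 := Nat.cast_ne_zero.mpr hq.ne'
      have h3 : (d:ℂ) = n * q := by
        field_simp [hq0c] at h2
        linear_combination h2
      have h4 : d = n * q := by exact_mod_cast h3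
      exact ⟨n, by rw [h4]; ring⟩
    have hzq : (e ((d : ℝ) / q)) ^ q = 1 := by
      rw [← hz q]
      have : (q : ℝ) * (d : ℝ) / q = ((d : ℤ) : ℝ) := by field_simp
      rw [this, e_int]
    rw [geom_sum_eq hz1, hzq]
    simp [h]

lemma e_zero : e 0 = 1 := by simpa using e_int 0

lemma ortho (q : ℕ) (hq : 0 < q) (U : Finset ℕ) (b c : ℕ → ℤ)
    (hb : ∀ a ∈ U, ∀ a' ∈ U, (q : ℤ) ∣ b a - b a' → a = a') :
    ∑ α ∈ Finset.range q, ‖∑ a ∈ U, e (((α : ℝ) * (b a : ℝ) + (c a : ℝ)) / q)‖ ^ 2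
      = (q : ℝ) * U.card := by
  classical
  set A : ℕ → ℂ := fun α => ∑ a ∈ U, e (((α : ℝ) * (b a : ℝ) + (c a : ℝ)) / q) with hA
  have hterm : ∀ α : ℕ, ((‖A α‖ ^ 2 : ℝ) : ℂ)
      = ∑ a ∈ U, ∑ a' ∈ U,
          e ((α : ℝ) * ((b a - b a' : ℤ) : ℝ) / q) * e (((c a - c a' : ℤ) : ℝ) / q) := by
    intro α
    have h1 : ((‖A α‖ ^ 2 : ℝ) : ℂ) = A α * (starRingEnd ℂ) (A α) := by
      rw [Complex.mul_conj, Complex.normSq_eq_norm_sq]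
    rw [h1, hA, map_sum, Finset.sum_mul_sum]
    refine Finset.sum_congr rfl fun a ha => Finset.sum_congr rfl fun a' ha' => ?_
    rw [e_conj, ← e_add, ← e_add]
    congr 1
    push_cast
    field_simp
    ring
  have key : ∑ α ∈ Finset.range q, ((‖A α‖ ^ 2 : ℝ) : ℂ) = ((q : ℝ) * U.card : ℂ) := by
    simp_rw [hterm]
    rw [Finset.sum_comm]
    have step : ∀ a ∈ U,
        ∑ a' ∈ U, ∑ α ∈ Finset.range q,
          e ((α : ℝ) * ((b a - b a' : ℤ) : ℝ) / q) * e (((c a - c a' : ℤ) : ℝ) / q)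
        = (q : ℂ) := by
      intro a ha
      have inner : ∀ a' ∈ U,
          ∑ α ∈ Finset.range q,
            e ((α : ℝ) * ((b a - b a' : ℤ) : ℝ) / q) * e (((c a - c a' : ℤ) : ℝ) / q)
          = if a' = a then (q : ℂ) else 0 := by
        intro a' ha'
        rw [← Finset.sum_mul, sum_e q hq]
        by_cases hd : (q : ℤ) ∣ b a - b a'
        · have : a = a' := hb a ha a' ha' hd
          subst this
          simp [e_zero]
        · have hne : a' ≠ a := fun h => hd (by rw [h]; simp)
          rw [if_neg hd, if_neg hne, zero_mul]
      rw [Finset.sum_congr rfl inner, Finset.sum_ite_eq' U a (fun _ => (q : ℂ)), if_pos ha]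
    rw [show (∑ y ∈ U, ∑ x ∈ Finset.range q, ∑ a' ∈ U,
          e ((x : ℝ) * ((b y - b a' : ℤ) : ℝ) / q) * e (((c y - c a' : ℤ) : ℝ) / q))
        = ∑ y ∈ U, ∑ a' ∈ U, ∑ x ∈ Finset.range q,
          e ((x : ℝ) * ((b y - b a' : ℤ) : ℝ) / q) * e (((c y - c a' : ℤ) : ℝ) / q) from
        Finset.sum_congr rfl fun a _ => Finset.sum_comm]
    rw [Finset.sum_congr rfl step, Finset.sum_const, nsmul_eq_mul]
    push_cast; ring
  have final : ((∑ α ∈ Finset.range q, ‖A α‖ ^ 2 : ℝ) : ℂ) = (((q : ℝ) * U.card : ℝ) : ℂ) := by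
    push_cast at key ⊢
    exact key
  exact Complex.ofReal_injective final

lemma modInv_inj (q : ℕ) (hq : 0 < q) {a a' : ℕ} (ha : a < q) (ha' : a' < q)
    (hca : Nat.Coprime a q) (hca' : Nat.Coprime a' q)
    (hdvd : (q : ℤ) ∣ modInv q a - modInv q a') : a = a' := by
  haveI : NeZero q := ⟨hq.ne'⟩
  have hcast : ∀ n : ℕ, ((modInv q n : ℤ) : ZMod q) = (n : ZMod q)⁻¹ := by
    intro n
    simp [modInv, ZMod.natCast_val, ZMod.cast_id]
  have heq : ((a : ZMod q))⁻¹ = ((a' : ZMod q))⁻¹ := by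
    have h0 : ((modInv q a - modInv q a' : ℤ) : ZMod q) = 0 :=
      (ZMod.intCast_zmod_eq_zero_iff_dvd _ q).mpr hdvd
    push_cast at h0
    rw [sub_eq_zero] at h0
    rw [← hcast, ← hcast]
    exact_mod_cast h0
  have hu : IsUnit ((a : ZMod q)) := (ZMod.isUnit_iff_coprime a q).mpr hca
  have hu' : IsUnit ((a' : ZMod q)) := (ZMod.isUnit_iff_coprime a' q).mpr hca'
  have hzeq : (a : ZMod q) = (a' : ZMod q) := by
    calc (a : ZMod q) = (a : ZMod q) * ((a' : ZMod q)⁻¹ * (a' : ZMod q)) := by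
          rw [ZMod.inv_mul_of_unit _ hu', mul_one]
      _ = ((a : ZMod q) * (a : ZMod q)⁻¹) * (a' : ZMod q) := by rw [← heq]; ring
      _ = (a' : ZMod q) := by rw [ZMod.mul_inv_of_unit _ hu, one_mul]
  have := congrArg ZMod.val hzeq
  rwa [ZMod.val_cast_of_lt ha, ZMod.val_cast_of_lt ha'] at this

theorem zero_frequency_character_sum_bound (k : ℕ) (hk : 1 ≤ k) :
    ∀ ε : ℝ, 0 < ε → ∃ C : ℝ, 0 < C ∧ ∀ q : ℕ, 0 < q → Odd q →
      ∀ m₁ m₂ n₃ n₃' : ℤ,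
        ‖(q : ℂ) ^ 2 *
          ∑ a₁ ∈ (Finset.range q).filter (fun x => Nat.Coprime x q),
            ∑ a₂ ∈ (Finset.range q).filter (fun x => Nat.Coprime x q),
              ∑ α ∈ (Finset.range q).filter (fun x => Nat.Coprime x q),
                e ((((α : ℤ) * (modInv q a₁ - modInv q a₂) +
                    modInv q 4 * (m₁ ^ 2 + m₂ ^ 2) * (modInv q a₂ - modInv q a₁) +
                    n₃' ^ k * (a₂ : ℤ) - n₃ ^ k * (a₁ : ℤ) : ℤ) : ℝ) / q)‖ ≤
          C * (q : ℝ) ^ (4 + ε) := by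
  intro ε hε
  refine ⟨1, one_pos, ?_⟩
  intro q hq hodd m₁ m₂ n₃ n₃'
  set U := (Finset.range q).filter (fun x => Nat.Coprime x q) with hU
  have hUsub : U ⊆ Finset.range q := Finset.filter_subset _ _
  have hUmem : ∀ a ∈ U, a < q ∧ Nat.Coprime a q := by
    intro a ha
    rw [hU, Finset.mem_filter, Finset.mem_range] at ha
    exact ha
  set M : ℤ := m₁ ^ 2 + m₂ ^ 2 with hM
  set b₁ : ℕ → ℤ := fun a => modInv q a with hb₁
  set c₁ : ℕ → ℤ := fun a => -(modInv q 4 * M * modInv q a) - n₃ ^ k * a with hc₁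
  set b₂ : ℕ → ℤ := fun a => -modInv q a with hb₂
  set c₂ : ℕ → ℤ := fun a => modInv q 4 * M * modInv q a + n₃' ^ k * a with hc₂
  set F : ℕ → ℕ → ℂ := fun α a => e (((α : ℝ) * (b₁ a : ℝ) + (c₁ a : ℝ)) / q) with hF
  set G : ℕ → ℕ → ℂ := fun α a => e (((α : ℝ) * (b₂ a : ℝ) + (c₂ a : ℝ)) / q) with hG
  have hq0 : (q : ℝ) ≠ 0 := Nat.cast_ne_zero.mpr hq.ne'
  -- injectivity hypotheses
  have hinj₁ : ∀ a ∈ U, ∀ a' ∈ U, (q : ℤ) ∣ b₁ a - b₁ a' → a = a' := by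
    intro a ha a' ha' hd
    obtain ⟨h1, h2⟩ := hUmem a ha
    obtain ⟨h1', h2'⟩ := hUmem a' ha'
    exact modInv_inj q hq h1 h1' h2 h2' hd
  have hinj₂ : ∀ a ∈ U, ∀ a' ∈ U, (q : ℤ) ∣ b₂ a - b₂ a' → a = a' := by
    intro a ha a' ha' hd
    obtain ⟨h1, h2⟩ := hUmem a ha
    obtain ⟨h1', h2'⟩ := hUmem a' ha'
    refine modInv_inj q hq h1 h1' h2 h2' ?_
    have : b₂ a - b₂ a' = -(modInv q a - modInv q a') := by rw [hb₂]; ring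
    rw [this, dvd_neg] at hd
    exact hd
  -- split the summand
  have hsplit : ∀ a₁ ∈ U, ∀ a₂ ∈ U, ∀ α ∈ U,
      e ((((α : ℤ) * (modInv q a₁ - modInv q a₂) +
          modInv q 4 * (m₁ ^ 2 + m₂ ^ 2) * (modInv q a₂ - modInv q a₁) +
          n₃' ^ k * (a₂ : ℤ) - n₃ ^ k * (a₁ : ℤ) : ℤ) : ℝ) / q)
        = F α a₁ * G α a₂ := by
    intro a₁ _ a₂ _ α _
    rw [hF, hG, ← e_add]
    congr 1
    rw [← add_div]
    congr 1
    rw [hb₁, hb₂, hc₁, hc₂, hM]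
    push_cast
    ring
  -- rewrite the sum
  have hS : (∑ a₁ ∈ U, ∑ a₂ ∈ U, ∑ α ∈ U,
        e ((((α : ℤ) * (modInv q a₁ - modInv q a₂) +
            modInv q 4 * (m₁ ^ 2 + m₂ ^ 2) * (modInv q a₂ - modInv q a₁) +
            n₃' ^ k * (a₂ : ℤ) - n₃ ^ k * (a₁ : ℤ) : ℤ) : ℝ) / q))
      = ∑ α ∈ U, (∑ a₁ ∈ U, F α a₁) * (∑ a₂ ∈ U, G α a₂) := by
    calc (∑ a₁ ∈ U, ∑ a₂ ∈ U, ∑ α ∈ U,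
          e ((((α : ℤ) * (modInv q a₁ - modInv q a₂) +
              modInv q 4 * (m₁ ^ 2 + m₂ ^ 2) * (modInv q a₂ - modInv q a₁) +
              n₃' ^ k * (a₂ : ℤ) - n₃ ^ k * (a₁ : ℤ) : ℤ) : ℝ) / q))
        = ∑ a₁ ∈ U, ∑ a₂ ∈ U, ∑ α ∈ U, F α a₁ * G α a₂ :=
          Finset.sum_congr rfl fun a₁ h₁ => Finset.sum_congr rfl fun a₂ h₂ =>
            Finset.sum_congr rfl fun α hα => hsplit a₁ h₁ a₂ h₂ α hα
      _ = ∑ a₁ ∈ U, ∑ α ∈ U, ∑ a₂ ∈ U, F α a₁ * G α a₂ :=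
          Finset.sum_congr rfl fun _ _ => Finset.sum_comm
      _ = ∑ α ∈ U, ∑ a₁ ∈ U, ∑ a₂ ∈ U, F α a₁ * G α a₂ := Finset.sum_comm
      _ = ∑ α ∈ U, (∑ a₁ ∈ U, F α a₁) * (∑ a₂ ∈ U, G α a₂) :=
          Finset.sum_congr rfl fun α _ => (Finset.sum_mul_sum U U _ _).symm
  -- orthogonality bounds
  have hcard : (U.card : ℝ) ≤ q := by
    have := Finset.card_le_card hUsub
    rw [Finset.card_range] at this
    exact_mod_cast this
  have hA2 : ∑ α ∈ Finset.range q, ‖∑ a ∈ U, F α a‖ ^ 2 = (q : ℝ) * U.card :=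
    ortho q hq U b₁ c₁ hinj₁
  have hB2 : ∑ α ∈ Finset.range q, ‖∑ a ∈ U, G α a‖ ^ 2 = (q : ℝ) * U.card :=
    ortho q hq U b₂ c₂ hinj₂
  -- Cauchy-Schwarz
  have hXbound : ‖∑ α ∈ U, (∑ a₁ ∈ U, F α a₁) * (∑ a₂ ∈ U, G α a₂)‖ ≤ (q : ℝ) ^ 2 := by
    set X : ℝ := ∑ α ∈ Finset.range q, ‖∑ a₁ ∈ U, F α a₁‖ * ‖∑ a₂ ∈ U, G α a₂‖ with hX
    have h1 : ‖∑ α ∈ U, (∑ a₁ ∈ U, F α a₁) * (∑ a₂ ∈ U, G α a₂)‖ ≤ X := by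
      refine (norm_sum_le _ _).trans ?_
      rw [hX]
      refine (Finset.sum_le_sum_of_subset_of_nonneg hUsub
        (fun i _ _ => mul_nonneg (norm_nonneg _) (norm_nonneg _))).trans_eq' ?_
      exact Finset.sum_congr rfl fun α _ => (norm_mul _ _).symm
    have h3 : X ^ 2 ≤ ((q : ℝ) * U.card) * ((q : ℝ) * U.card) := by
      have hcs := Finset.sum_mul_sq_le_sq_mul_sq (Finset.range q)
        (fun α => ‖∑ a₁ ∈ U, F α a₁‖) (fun α => ‖∑ a₂ ∈ U, G α a₂‖)
      rw [hA2, hB2] at hcs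
      exact hcs
    have h4 : ((q : ℝ) * U.card) * ((q : ℝ) * U.card) ≤ ((q : ℝ) ^ 2) ^ 2 := by
      have hqnn : (0 : ℝ) ≤ q := Nat.cast_nonneg q
      have hcnn : (0 : ℝ) ≤ U.card := Nat.cast_nonneg _
      have hsq : (U.card : ℝ) * (U.card : ℝ) ≤ (q : ℝ) * (q : ℝ) :=
        mul_le_mul hcard hcard hcnn hqnn
      nlinarith [hsq, sq_nonneg ((q : ℝ))]
    have hXnn : 0 ≤ X := Finset.sum_nonneg fun _ _ => mul_nonneg (norm_nonneg _) (norm_nonneg _)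
    have hq2nn : (0 : ℝ) ≤ (q : ℝ) ^ 2 := sq_nonneg _
    nlinarith
  -- conclude
  rw [hS, norm_mul, norm_pow, Complex.norm_natCast, one_mul]
  have hfinal : (q : ℝ) ^ 2 * (q : ℝ) ^ 2 ≤ (q : ℝ) ^ (4 + ε) := by
    have h1q : (1 : ℝ) ≤ q := by exact_mod_cast hq
    have : (q : ℝ) ^ 2 * (q : ℝ) ^ 2 = (q : ℝ) ^ ((4 : ℕ) : ℝ) := by
      rw [Real.rpow_natCast]; ring
    rw [this]
    refine Real.rpow_le_rpow_of_exponent_le h1q ?_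
    push_cast
    linarith
  calc (q : ℝ) ^ 2 * ‖∑ α ∈ U, (∑ a₁ ∈ U, F α a₁) * (∑ a₂ ∈ U, G α a₂)‖
      ≤ (q : ℝ) ^ 2 * (q : ℝ) ^ 2 := by
        exact mul_le_mul_of_nonneg_left hXbound (sq_nonneg _)
    _ ≤ (q : ℝ) ^ (4 + ε) := hfinal
end

section
/- Let Q(x, y) = A x² + B y² + 2 C x y with A, B, C ∈ ℤ be a positive definite binary quadratic form, and set D = A B − C². Let q be a positive integer and a an integer with gcd(q, 2 D a) = 1, and let m₁, m₂ be integers. Then | ∑_{α₁ = 0}^{q−1} ∑_{α₂ = 0}^{q−1} e( a ( Q(α₁, α₂) + m₁ α₁ + m₂ α₂ ) / q ) | = q. -/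
section aux
variable (q : ℕ) [NeZero q]

lemma sum_range_eq_sum_zmod (g : ZMod q → ℂ) :
    ∑ i ∈ Finset.range q, g (i : ZMod q) = ∑ x : ZMod q, g x :=
  Finset.sum_nbij' (fun i => (i : ZMod q)) (fun x => x.val)
    (fun a _ => Finset.mem_univ _) (fun x _ => Finset.mem_range.2 (ZMod.val_lt x))
    (fun a ha => ZMod.val_natCast_of_lt (Finset.mem_range.1 ha))
    (fun x _ => ZMod.natCast_zmod_val x) (fun a _ => rfl)

lemma e_eq_char (n : ℤ) : e ((n : ℝ) / q) = ZMod.stdAddChar ((n : ZMod q)) := by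
  rw [ZMod.stdAddChar_coe]
  unfold e
  congr 1
  push_cast
  ring

lemma conj_char (x : ZMod q) :
    (starRingEnd ℂ) (ZMod.stdAddChar x) = ZMod.stdAddChar (-x) := by
  have : x = ((x.val : ℤ) : ZMod q) := by simp
  rw [this, ← Int.cast_neg, ZMod.stdAddChar_coe, ZMod.stdAddChar_coe, ← Complex.exp_conj]
  congr 1
  push_cast
  simp only [map_div₀, map_mul, map_neg, Complex.conj_I, map_ofNat, map_intCast,
    Complex.conj_ofReal, map_natCast]
  ring

lemma sum_char_mul (c : ZMod q) :
    ∑ x : ZMod q, ZMod.stdAddChar (c * x) = if c = 0 then (q : ℂ) else 0 := by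
  have h := AddChar.sum_mulShift c (ZMod.isPrimitive_stdAddChar q)
  simp only [mul_comm] at h
  rw [h]
  simp [ZMod.card]

end aux

theorem quadratic_form_gauss_sum_abs (A B C : ℤ) (hA : 0 < A)
    (hD : 0 < A * B - C ^ 2) (q : ℕ) (hq : 0 < q) (a : ℤ)
    (hcop : Int.gcd (2 * (A * B - C ^ 2) * a) (q : ℤ) = 1) (m₁ m₂ : ℤ) :
    ‖∑ α₁ ∈ Finset.range q, ∑ α₂ ∈ Finset.range q,
      e (((a * (A * (α₁ : ℤ) ^ 2 + B * (α₂ : ℤ) ^ 2 + 2 * C * α₁ * α₂ +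
        m₁ * α₁ + m₂ * α₂) : ℤ) : ℝ) / q)‖ = q := by
  haveI : NeZero q := ⟨hq.ne'⟩
  set ψ : AddChar (ZMod q) ℂ := ZMod.stdAddChar with hψ
  set A' : ZMod q := (A : ZMod q)
  set B' : ZMod q := (B : ZMod q)
  set C' : ZMod q := (C : ZMod q)
  set a' : ZMod q := (a : ZMod q)
  set f : ZMod q → ZMod q → ZMod q := fun x y =>
    a' * (A' * x ^ 2 + B' * y ^ 2 + 2 * C' * x * y + (m₁ : ZMod q) * x + (m₂ : ZMod q) * y)
    with hf
  -- units
  have hco : IsCoprime (2 * (A * B - C ^ 2) * a) (q : ℤ) :=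
    Int.isCoprime_iff_gcd_eq_one.2 hcop
  obtain ⟨u, v, huv⟩ := hco
  have hcast : (u : ZMod q) * ((2 : ZMod q) * (A' * B' - C' ^ 2) * a') = 1 := by
    have := congrArg (fun n : ℤ => (n : ZMod q)) huv
    push_cast at this
    simpa [ZMod.natCast_self] using this
  have hbig : IsUnit ((2 : ZMod q) * (A' * B' - C' ^ 2) * a') :=
    IsUnit.of_mul_eq_one _ (by rw [mul_comm]; exact hcast)
  have h2a : IsUnit (2 * a') := by
    have : (2 : ZMod q) * (A' * B' - C' ^ 2) * a' = (A' * B' - C' ^ 2) * (2 * a') := by ring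
    rw [this] at hbig
    exact isUnit_of_mul_isUnit_right hbig
  have hDu : IsUnit (A' * B' - C' ^ 2) := by
    have : (2 : ZMod q) * (A' * B' - C' ^ 2) * a' = (2 * a') * (A' * B' - C' ^ 2) := by ring
    rw [this] at hbig
    exact isUnit_of_mul_isUnit_right hbig
  -- rewrite the sum
  set S : ℂ := ∑ p : ZMod q × ZMod q, ψ (f p.1 p.2) with hS
  have hsum : (∑ α₁ ∈ Finset.range q, ∑ α₂ ∈ Finset.range q,
      e (((a * (A * (α₁ : ℤ) ^ 2 + B * (α₂ : ℤ) ^ 2 + 2 * C * α₁ * α₂ +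
        m₁ * α₁ + m₂ * α₂) : ℤ) : ℝ) / q)) = S := by
    have hterm : ∀ α₁ α₂ : ℕ,
        e (((a * (A * (α₁ : ℤ) ^ 2 + B * (α₂ : ℤ) ^ 2 + 2 * C * α₁ * α₂ +
          m₁ * α₁ + m₂ * α₂) : ℤ) : ℝ) / q) = ψ (f (α₁ : ZMod q) (α₂ : ZMod q)) := by
      intro α₁ α₂
      rw [e_eq_char]
      congr 1
      rw [hf]
      push_cast
      ring
    calc (∑ α₁ ∈ Finset.range q, ∑ α₂ ∈ Finset.range q,
        e (((a * (A * (α₁ : ℤ) ^ 2 + B * (α₂ : ℤ) ^ 2 + 2 * C * α₁ * α₂ +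
          m₁ * α₁ + m₂ * α₂) : ℤ) : ℝ) / q))
        = ∑ α₁ ∈ Finset.range q, ∑ α₂ ∈ Finset.range q, ψ (f (α₁ : ZMod q) (α₂ : ZMod q)) := by
          simp_rw [hterm]
      _ = ∑ x : ZMod q, ∑ y : ZMod q, ψ (f x y) := by
          rw [sum_range_eq_sum_zmod q (fun x => ∑ α₂ ∈ Finset.range q, ψ (f x (α₂ : ZMod q)))]
          exact Finset.sum_congr rfl fun x _ => sum_range_eq_sum_zmod q (fun y => ψ (f x y))
      _ = S := by rw [hS, Fintype.sum_prod_type]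
  rw [hsum]
  -- key identity
  have key : S * (starRingEnd ℂ) S = (q : ℂ) ^ 2 := by
    have hconj : (starRingEnd ℂ) S = ∑ r : ZMod q × ZMod q, ψ (-(f r.1 r.2)) := by
      rw [hS, map_sum]
      exact Finset.sum_congr rfl fun r _ => conj_char q _
    rw [mul_comm, hconj, Finset.sum_mul]
    have step : ∀ r : ZMod q × ZMod q,
        ψ (-(f r.1 r.2)) * S
          = ∑ z : ZMod q × ZMod q, ψ (f z.1 z.2) *
              (ψ ((2 * a' * (A' * z.1 + C' * z.2)) * r.1) *
               ψ ((2 * a' * (C' * z.1 + B' * z.2)) * r.2)) := by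
      intro r
      have hre : S = ∑ z : ZMod q × ZMod q, ψ (f (r.1 + z.1) (r.2 + z.2)) := by
        rw [hS]
        exact (Equiv.sum_comp (Equiv.addLeft r) (fun p => ψ (f p.1 p.2))).symm
      rw [hre, Finset.mul_sum]
      refine Finset.sum_congr rfl fun z _ => ?_
      rw [← AddChar.map_add_eq_mul, ← AddChar.map_add_eq_mul, ← AddChar.map_add_eq_mul]
      congr 1
      rw [hf]
      ring
    calc ∑ r : ZMod q × ZMod q, ψ (-(f r.1 r.2)) * S
        = ∑ r : ZMod q × ZMod q, ∑ z : ZMod q × ZMod q, ψ (f z.1 z.2) *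
              (ψ ((2 * a' * (A' * z.1 + C' * z.2)) * r.1) *
               ψ ((2 * a' * (C' * z.1 + B' * z.2)) * r.2)) :=
          Finset.sum_congr rfl fun r _ => step r
      _ = ∑ z : ZMod q × ZMod q, ψ (f z.1 z.2) *
            ((if 2 * a' * (A' * z.1 + C' * z.2) = 0 then (q : ℂ) else 0) *
             (if 2 * a' * (C' * z.1 + B' * z.2) = 0 then (q : ℂ) else 0)) := by
          rw [Finset.sum_comm]
          refine Finset.sum_congr rfl fun z _ => ?_
          rw [← Finset.mul_sum]
          congr 1
          rw [Fintype.sum_prod_type]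
          dsimp only
          rw [← Finset.sum_mul_sum]
          rw [sum_char_mul q (2 * a' * (A' * z.1 + C' * z.2)),
            sum_char_mul q (2 * a' * (C' * z.1 + B' * z.2))]
      _ = ∑ z : ZMod q × ZMod q, (if z = 0 then (q : ℂ) ^ 2 else 0) := by
          refine Finset.sum_congr rfl fun z _ => ?_
          by_cases h1 : 2 * a' * (A' * z.1 + C' * z.2) = 0
          · by_cases h2 : 2 * a' * (C' * z.1 + B' * z.2) = 0
            · have e1 : A' * z.1 + C' * z.2 = 0 :=
                (h2a.mul_right_eq_zero).mp h1
              have e2 : C' * z.1 + B' * z.2 = 0 :=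
                (h2a.mul_right_eq_zero).mp h2
              have hz1 : z.1 = 0 := by
                refine (hDu.mul_right_eq_zero).mp ?_
                have : (A' * B' - C' ^ 2) * z.1
                    = B' * (A' * z.1 + C' * z.2) - C' * (C' * z.1 + B' * z.2) := by ring
                rw [this, e1, e2]; ring
              have hz2 : z.2 = 0 := by
                refine (hDu.mul_right_eq_zero).mp ?_
                have : (A' * B' - C' ^ 2) * z.2
                    = A' * (C' * z.1 + B' * z.2) - C' * (A' * z.1 + C' * z.2) := by ring
                rw [this, e1, e2]; ring
              have hz : z = 0 := Prod.ext hz1 hz2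
              rw [if_pos h1, if_pos h2, if_pos hz, hz]
              have h00 : f 0 0 = 0 := by rw [hf]; ring
              rw [Prod.fst_zero, Prod.snd_zero, h00, AddChar.map_zero_eq_one, one_mul, sq]
            · have hz : z ≠ 0 := by
                intro hz0
                apply h2
                rw [hz0]
                simp
              rw [if_neg h2, if_neg hz]
              ring
          · have hz : z ≠ 0 := by
              intro hz0
              apply h1
              rw [hz0]
              simp
            rw [if_neg h1, if_neg hz]
            ring
      _ = (q : ℂ) ^ 2 := by simp
  -- finish
  rw [Complex.mul_conj] at key
  have hns : Complex.normSq S = (q : ℝ) ^ 2 := by exact_mod_cast key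
  have : ‖S‖ = Real.sqrt (Complex.normSq S) := by
    rw [Complex.norm_def]
  rw [this, hns, Real.sqrt_sq (Nat.cast_nonneg q)]
end

section
/- Let W : ℝ → ℂ be a smooth function supported in the interval [1, 2]. For every natural number j there exists a constant C > 0 (depending only on j and W) such that for all real X ≥ 1, all real u, every positive integer q, and every integer m₁ with |m₁| ≥ 8(1 + |u|), one has | ∫_ℝ W(t) · e( −m₁ X^{1/2} t / q − u X^{1/2} t² / q ) dt | ≤ C · ( q / ( |m₁| X^{1/2} ) )^j. -/
open MeasureTheory Set Function Complex

namespace Osc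

/-- the (complexified) derivative of the phase: an affine function. -/
noncomputable def ll (A B : ℝ) (t : ℝ) : ℂ := ((A + B * t : ℝ) : ℂ)

/-- the numerators appearing after repeated integration by parts. -/
noncomputable def Q (W : ℝ → ℂ) (A B : ℝ) : ℕ → ℝ → ℂ
  | 0 => W
  | n + 1 => fun t => deriv (Q W A B n) t * ll A B t -
      ((2 * (n : ℂ) + 1) * (B : ℂ)) * Q W A B n t

/-- the phase factor. -/
noncomputable def E (A B : ℝ) (t : ℝ) : ℂ := e (A * t + B * t ^ 2 / 2)

variable {W : ℝ → ℂ} {A B : ℝ}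

lemma ll_contDiff : ContDiff ℝ (↑(⊤:ℕ∞)) (ll A B) :=
  Complex.ofRealCLM.contDiff.comp ((contDiff_const).add ((contDiff_const).mul contDiff_id))

lemma hasDerivAt_ll (t : ℝ) : HasDerivAt (ll A B) ((B : ℂ)) t := by
  have h : HasDerivAt (fun t : ℝ => A + B * t) B t := by
    simpa using ((hasDerivAt_id t).const_mul B).const_add A
  exact h.ofReal_comp

lemma Q_contDiff (hW : ContDiff ℝ (↑(⊤:ℕ∞)) W) (n : ℕ) :
    ContDiff ℝ (↑(⊤:ℕ∞)) (Q W A B n) := by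
  induction n with
  | zero => exact hW
  | succ n ih =>
    exact (((contDiff_infty_iff_deriv.mp ih).2).mul ll_contDiff).sub (contDiff_const.mul ih)

lemma Q_support (hsupp : support W ⊆ Icc 1 2) (n : ℕ) :
    support (Q W A B n) ⊆ Icc 1 2 := by
  induction n with
  | zero => exact hsupp
  | succ n ih =>
    have hts : tsupport (Q W A B n) ⊆ Icc 1 2 := closure_minimal ih isClosed_Icc
    intro t ht
    by_contra hmem
    apply ht
    have h1 : deriv (Q W A B n) t = 0 := by
      by_contra h
      exact hmem (hts (support_deriv_subset (by simpa using h)))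
    have h2 : Q W A B n t = 0 := by
      by_contra h
      exact hmem (ih (by simpa using h))
    simp [Q, h1, h2]




lemma smooth_nat {f : ℝ → ℂ} (h : ContDiff ℝ (↑(⊤:ℕ∞)) f) (k : ℕ) : ContDiff ℝ k f :=
  h.of_le (by exact_mod_cast le_top)

lemma deriv_ll : deriv (ll A B) = fun _ : ℝ => (B : ℂ) :=
  funext fun t => (hasDerivAt_ll t).deriv

lemma const_iteratedFDeriv_norm (c : ℂ) (m : ℕ) (hm : m ≠ 0) (t : ℝ) :
    ‖iteratedFDeriv ℝ m (fun _ : ℝ => c) t‖ = 0 := by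
  rw [iteratedFDeriv_const_of_ne hm]; simp

lemma ll_iteratedFDeriv_norm {M : ℝ} (hM : 0 < M) (hB : |B| ≤ M / 2) (m : ℕ) (t : ℝ)
    (h3 : ‖ll A B t‖ ≤ 3 * M) :
    ‖iteratedFDeriv ℝ m (ll A B) t‖ ≤ 3 * M := by
  match m with
  | 0 => rw [norm_iteratedFDeriv_zero]; exact h3
  | 1 =>
    rw [norm_iteratedFDeriv_eq_norm_iteratedDeriv, iteratedDeriv_one, (hasDerivAt_ll t).deriv]
    simp only [Complex.norm_real, Real.norm_eq_abs]
    linarith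
  | (m + 2) =>
    rw [norm_iteratedFDeriv_eq_norm_iteratedDeriv, iteratedDeriv_succ', deriv_ll]
    rw [← norm_iteratedFDeriv_eq_norm_iteratedDeriv, const_iteratedFDeriv_norm _ _ m.succ_ne_zero]
    positivity

lemma Q_bound (W : ℝ → ℂ) (hW : ContDiff ℝ (↑(⊤:ℕ∞)) W) (n : ℕ) :
    ∀ k : ℕ, ∃ C : ℝ, 0 < C ∧ ∀ (A B M : ℝ), 0 < M → |B| ≤ M / 2 →
      (∀ t ∈ Icc (1:ℝ) 2, ‖ll A B t‖ ≤ 3 * M) →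
      ∀ t ∈ Icc (1:ℝ) 2, ‖iteratedDeriv k (Q W A B n) t‖ ≤ C * M ^ n := by
  induction n with
  | zero =>
    intro k
    obtain ⟨C, hC⟩ := (isCompact_Icc (a := (1:ℝ)) (b := 2)).exists_bound_of_continuousOn
      ((ContDiff.iterate_deriv k hW).continuous.continuousOn)
    refine ⟨max C 1, lt_of_lt_of_le one_pos (le_max_right _ _), ?_⟩
    intro A B M hM hB h3 t ht
    rw [pow_zero, mul_one]
    calc ‖iteratedDeriv k (Q W A B 0) t‖ = ‖deriv^[k] W t‖ := by
          rw [show Q W A B 0 = W from rfl, iteratedDeriv_eq_iterate]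
      _ ≤ C := hC t ht
      _ ≤ max C 1 := le_max_left _ _
  | succ n ih =>
    intro k
    choose Cf hCf using ih
    set D1 : ℝ := ∑ i ∈ Finset.range (k+1), (k.choose i : ℝ) * Cf (i+1) with hD1def
    have hD1 : 0 ≤ D1 := Finset.sum_nonneg fun i _ => by
      have := (hCf (i+1)).1; positivity
    refine ⟨3 * D1 + (2 * n + 1) * Cf k, by have := (hCf k).1; positivity, ?_⟩
    intro A B M hM hB h3 t ht
    set cc : ℂ := -((2 * (n:ℂ) + 1) * (B : ℂ)) with hccdef
    have hQn := Q_contDiff (A := A) (B := B) hW n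
    have hdQn : ContDiff ℝ (↑(⊤:ℕ∞)) (deriv (Q W A B n)) := (contDiff_infty_iff_deriv.mp hQn).2
    have hsplit : Q W A B (n+1) = (fun t => deriv (Q W A B n) t * ll A B t)
        + (fun s => cc * Q W A B n s) := by
      funext s; simp only [Q, Pi.add_apply, hccdef]; ring
    have hBM : |B| ≤ M := le_trans hB (by linarith)
    have hnormcc : ‖cc‖ ≤ (2 * n + 1) * M := by
      have hcc2 : cc = ((-((2 * (n:ℝ) + 1) * B) : ℝ) : ℂ) := by
        rw [hccdef]; push_cast; ring
      rw [hcc2, Complex.norm_real, Real.norm_eq_abs, abs_neg, abs_mul,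
        _root_.abs_of_nonneg (by positivity : (0:ℝ) ≤ 2 * (n:ℝ) + 1)]
      exact mul_le_mul le_rfl hBM (abs_nonneg _) (by positivity)
    -- term 1 bound
    have hterm1 : ‖iteratedFDeriv ℝ k (fun t => deriv (Q W A B n) t * ll A B t) t‖
        ≤ 3 * D1 * M ^ (n+1) := by
      have hsum : ∑ i ∈ Finset.range (k+1), (k.choose i : ℝ) * (Cf (i+1) * M ^ n) * (3 * M)
          = 3 * D1 * M ^ (n+1) := by
        rw [hD1def, Finset.mul_sum, Finset.sum_mul]
        exact Finset.sum_congr rfl fun i _ => by rw [pow_succ]; ring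
      calc ‖iteratedFDeriv ℝ k (fun t => deriv (Q W A B n) t * ll A B t) t‖
          ≤ ∑ i ∈ Finset.range (k+1), (k.choose i : ℝ) *
              ‖iteratedFDeriv ℝ i (deriv (Q W A B n)) t‖ *
              ‖iteratedFDeriv ℝ (k - i) (ll A B) t‖ :=
            norm_iteratedFDeriv_mul_le hdQn ll_contDiff t (by exact_mod_cast le_top)
        _ ≤ ∑ i ∈ Finset.range (k+1), (k.choose i : ℝ) * (Cf (i+1) * M ^ n) * (3 * M) := by
            refine Finset.sum_le_sum fun i _ => ?_
            have hb1 : ‖iteratedFDeriv ℝ i (deriv (Q W A B n)) t‖ ≤ Cf (i+1) * M ^ n := by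
              rw [norm_iteratedFDeriv_eq_norm_iteratedDeriv, ← iteratedDeriv_succ']
              exact (hCf (i+1)).2 A B M hM hB h3 t ht
            have hb2 := ll_iteratedFDeriv_norm (A := A) (B := B) hM hB (k - i) t (h3 t ht)
            have hnn : (0:ℝ) ≤ (k.choose i : ℝ) := by positivity
            exact mul_le_mul (mul_le_mul le_rfl hb1 (norm_nonneg _) hnn) hb2 (norm_nonneg _)
              (by have := (hCf (i+1)).1; positivity)
        _ = 3 * D1 * M ^ (n+1) := hsum
    -- term 2 bound
    have hccQ : iteratedDeriv k (fun s => cc * Q W A B n s) t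
        = cc * iteratedDeriv k (Q W A B n) t := by
      have h := iteratedDerivWithin_const_smul (mem_univ t) uniqueDiffOn_univ cc
        ((smooth_nat hQn k).contDiffWithinAt)
      simp only [iteratedDerivWithin_univ] at h
      simpa [smul_eq_mul] using h
    have hterm2 : ‖iteratedFDeriv ℝ k (fun s => cc * Q W A B n s) t‖
        ≤ (2 * n + 1) * Cf k * M ^ (n+1) := by
      rw [norm_iteratedFDeriv_eq_norm_iteratedDeriv, hccQ, norm_mul]
      have hQb := (hCf k).2 A B M hM hB h3 t ht
      calc ‖cc‖ * ‖iteratedDeriv k (Q W A B n) t‖ ≤ ((2 * n + 1) * M) * (Cf k * M ^ n) :=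
            mul_le_mul hnormcc hQb (norm_nonneg _) (by positivity)
        _ = (2 * n + 1) * Cf k * M ^ (n+1) := by rw [pow_succ]; ring
    -- combine
    rw [← norm_iteratedFDeriv_eq_norm_iteratedDeriv, hsplit]
    rw [iteratedFDeriv_add_apply (𝕜 := ℝ) (i := k)
      (smooth_nat (hdQn.mul ll_contDiff) k).contDiffAt (smooth_nat (contDiff_const.mul hQn) k).contDiffAt]
    calc ‖iteratedFDeriv ℝ k (fun t => deriv (Q W A B n) t * ll A B t) t
          + iteratedFDeriv ℝ k (fun s => cc * Q W A B n s) t‖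
        ≤ ‖iteratedFDeriv ℝ k (fun t => deriv (Q W A B n) t * ll A B t) t‖
          + ‖iteratedFDeriv ℝ k (fun s => cc * Q W A B n s) t‖ := norm_add_le _ _
      _ ≤ 3 * D1 * M ^ (n+1) + (2 * n + 1) * Cf k * M ^ (n+1) := add_le_add hterm1 hterm2
      _ = (3 * D1 + (2 * n + 1) * Cf k) * M ^ (n+1) := by ring

lemma norm_e (x : ℝ) : ‖e x‖ = 1 := by
  have h : (2 * (Real.pi:ℂ) * Complex.I * (x:ℂ)).re = 0 := by simp
  rw [e, Complex.norm_exp, h, Real.exp_zero]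

lemma hasDerivAt_E (t : ℝ) :
    HasDerivAt (E A B) (2 * Real.pi * Complex.I * ll A B t * E A B t) t := by
  have h1 : HasDerivAt (fun t : ℝ => A * t + B * t ^ 2 / 2) (A + B * t) t := by
    have ha := (hasDerivAt_id t).const_mul A
    have hb := ((hasDerivAt_pow 2 t).const_mul B).div_const 2
    have h := ha.add hb
    simp only [mul_one] at h
    refine h.congr_deriv (Eq.symm ?_)
    norm_num; ring
  have h3 := ((h1.ofReal_comp).const_mul (2 * (Real.pi:ℂ) * Complex.I)).cexp
  have hfun : E A B = fun s : ℝ =>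
      Complex.exp (2 * (Real.pi:ℂ) * Complex.I * ((A * s + B * s ^ 2 / 2 : ℝ) : ℂ)) := rfl
  rw [hfun]
  convert h3 using 1
  rw [ll]
  ring

/-- integrand after n integrations by parts -/
noncomputable def gE (W : ℝ → ℂ) (A B : ℝ) (n : ℕ) (t : ℝ) : ℂ :=
  Q W A B n t * E A B t / ((2 * Real.pi * Complex.I) ^ n * (ll A B t) ^ (2 * n))

lemma c_ne : (2 * (Real.pi:ℂ) * Complex.I) ≠ 0 := by
  simp [Real.pi_ne_zero, Complex.I_ne_zero, Complex.ofReal_ne_zero]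

lemma Q_zero_outside (hsupp : support W ⊆ Icc 1 2) (n : ℕ) {s : ℝ} (hs : s ∉ Icc (1:ℝ) 2) :
    Q W A B n s = 0 := by
  by_contra h
  exact hs (Q_support hsupp n (by simpa using h))

lemma hasDerivAt_ll_pow (m : ℕ) (t : ℝ) :
    HasDerivAt (fun s => (ll A B s) ^ m) ((m : ℂ) * (ll A B t) ^ (m - 1) * (B : ℂ)) t := by
  induction m with
  | zero => simpa using hasDerivAt_const t (1:ℂ)
  | succ m ih =>
    have h := ih.mul (hasDerivAt_ll (A := A) (B := B) t)
    have hfun : (fun s => ll A B s ^ (m+1)) = fun s => ll A B s ^ m * ll A B s := by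
      funext s; rw [pow_succ]
    rw [hfun]
    refine h.congr_deriv (Eq.symm ?_)
    rcases Nat.eq_zero_or_pos m with hm | hm
    · subst hm; simp
    · have h2 : (ll A B t) ^ (m-1) * ll A B t = ll A B t ^ m := by
        rw [← pow_succ, Nat.sub_add_cancel hm]
      rw [Nat.add_sub_cancel]
      push_cast
      linear_combination (-(m:ℂ) * (B:ℂ)) * h2

lemma hasDerivAt_aux (hW : ContDiff ℝ (↑(⊤:ℕ∞)) W) (hsupp : support W ⊆ Icc 1 2)
    (hll : ∀ s ∈ Icc (1:ℝ) 2, ll A B s ≠ 0) (n : ℕ) (t : ℝ) :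
    HasDerivAt (fun s => Q W A B n s * E A B s /
        ((2 * Real.pi * Complex.I) ^ (n+1) * (ll A B s) ^ (2 * n + 1)))
      (gE W A B (n+1) t + gE W A B n t) t := by
  by_cases hz : ll A B t = 0
  · have htI : t ∉ Icc (1:ℝ) 2 := fun h => hll t h hz
    have hev : ∀ᶠ s in nhds t, s ∉ Icc (1:ℝ) 2 :=
      (isClosed_Icc.isOpen_compl).mem_nhds htI
    have h0 : HasDerivAt (fun _ : ℝ => (0:ℂ)) 0 t := hasDerivAt_const t 0
    have hval : gE W A B (n+1) t + gE W A B n t = 0 := by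
      simp [gE, Q_zero_outside (A := A) (B := B) hsupp (n+1) htI,
        Q_zero_outside (A := A) (B := B) hsupp n htI]
    rw [hval]
    apply h0.congr_of_eventuallyEq
    filter_upwards [hev] with s hs
    simp [Q_zero_outside (A := A) (B := B) hsupp n hs]
  · have hQd : HasDerivAt (Q W A B n) (deriv (Q W A B n) t) t :=
      ((Q_contDiff hW n).differentiable (by simp) t).hasDerivAt
    have hN := hQd.mul (hasDerivAt_E (A := A) (B := B) t)
    have hD := (hasDerivAt_ll_pow (A := A) (B := B) (2 * n + 1) t).const_mul
      ((2 * (Real.pi:ℂ) * Complex.I) ^ (n+1))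
    rw [Nat.add_sub_cancel] at hD
    have hDt : (2 * (Real.pi:ℂ) * Complex.I) ^ (n+1) * (ll A B t) ^ (2 * n + 1) ≠ 0 :=
      mul_ne_zero (pow_ne_zero _ c_ne) (pow_ne_zero _ hz)
    have hdiv := hN.div hD hDt
    refine hdiv.congr_deriv (Eq.symm ?_)
    rw [gE, gE]
    have hQ1 : Q W A B (n+1) t = deriv (Q W A B n) t * ll A B t -
        ((2 * (n:ℂ) + 1) * (B : ℂ)) * Q W A B n t := rfl
    rw [hQ1]
    have e1 : (2 * (Real.pi:ℂ) * Complex.I) ^ (n+1) * (ll A B t) ^ (2*(n+1)) ≠ 0 :=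
      mul_ne_zero (pow_ne_zero _ c_ne) (pow_ne_zero _ hz)
    have e2 : (2 * (Real.pi:ℂ) * Complex.I) ^ n * (ll A B t) ^ (2*n) ≠ 0 :=
      mul_ne_zero (pow_ne_zero _ c_ne) (pow_ne_zero _ hz)
    have e3 : ((2 * (Real.pi:ℂ) * Complex.I) ^ (n+1) * (ll A B t) ^ (2*n+1)) ^ 2 ≠ 0 :=
      pow_ne_zero _ hDt
    rw [div_add_div _ _ e1 e2, div_eq_div_iff (mul_ne_zero e1 e2) e3]
    push_cast [Pi.mul_apply]
    ring

lemma E_cont : Continuous (E A B) := by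
  unfold E e; fun_prop

lemma gE_support (hsupp : support W ⊆ Icc 1 2) (n : ℕ) {s : ℝ} (hs : s ∉ Icc (1:ℝ) 2) :
    gE W A B n s = 0 := by
  simp [gE, Q_zero_outside (A := A) (B := B) hsupp n hs]

lemma gE_cont (hW : ContDiff ℝ (↑(⊤:ℕ∞)) W) (hsupp : support W ⊆ Icc 1 2)
    (hll : ∀ s ∈ Icc (1:ℝ) 2, ll A B s ≠ 0) (n : ℕ) : Continuous (gE W A B n) := by
  rw [continuous_iff_continuousAt]
  intro t
  by_cases hz : ll A B t = 0
  · have htI : t ∉ Icc (1:ℝ) 2 := fun h => hll t h hz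
    have hev : ∀ᶠ s in nhds t, s ∉ Icc (1:ℝ) 2 :=
      (isClosed_Icc.isOpen_compl).mem_nhds htI
    apply continuousAt_const.congr
    filter_upwards [hev] with s hs
    rw [gE_support (A := A) (B := B) hsupp n hs]
  · have hnum : Continuous fun s => Q W A B n s * E A B s :=
      ((Q_contDiff hW n).continuous).mul E_cont
    have hden : Continuous fun s => (2 * (Real.pi:ℂ) * Complex.I) ^ n * (ll A B s) ^ (2*n) :=
      continuous_const.mul (ll_contDiff.continuous.pow _)
    exact (hnum.continuousAt).div (hden.continuousAt)
      (mul_ne_zero (pow_ne_zero _ c_ne) (pow_ne_zero _ hz))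

lemma gE_integrable (hW : ContDiff ℝ (↑(⊤:ℕ∞)) W) (hsupp : support W ⊆ Icc 1 2)
    (hll : ∀ s ∈ Icc (1:ℝ) 2, ll A B s ≠ 0) (n : ℕ) :
    Integrable (gE W A B n) := by
  apply (gE_cont hW hsupp hll n).integrable_of_hasCompactSupport
  apply HasCompactSupport.of_support_subset_isCompact isCompact_Icc
  intro s hs
  by_contra h
  exact (by simpa using hs : gE W A B n s ≠ 0) (gE_support (A := A) (B := B) hsupp n h)

lemma integral_step (hW : ContDiff ℝ (↑(⊤:ℕ∞)) W) (hsupp : support W ⊆ Icc 1 2)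
    (hll : ∀ s ∈ Icc (1:ℝ) 2, ll A B s ≠ 0) (n : ℕ) :
    ∫ t : ℝ, gE W A B (n+1) t = - ∫ t : ℝ, gE W A B n t := by
  set h : ℝ → ℂ := fun s => Q W A B n s * E A B s /
      ((2 * Real.pi * Complex.I) ^ (n+1) * (ll A B s) ^ (2 * n + 1)) with hh
  have hderiv : ∀ s : ℝ, HasDerivAt h (gE W A B (n+1) s + gE W A B n s) s :=
    fun s => hasDerivAt_aux hW hsupp hll n s
  have int1 := gE_integrable (A := A) (B := B) hW hsupp hll (n+1)
  have int2 := gE_integrable (A := A) (B := B) hW hsupp hll n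
  have hint : Integrable (fun s => gE W A B (n+1) s + gE W A B n s) := int1.add int2
  have h03 : ∫ s in (0:ℝ)..3, (gE W A B (n+1) s + gE W A B n s) = h 3 - h 0 :=
    intervalIntegral.integral_eq_sub_of_hasDerivAt (fun x _ => hderiv x) hint.intervalIntegrable
  have h3 : h 3 = 0 := by
    rw [hh]; simp [Q_zero_outside (A := A) (B := B) hsupp n (by norm_num : (3:ℝ) ∉ Icc (1:ℝ) 2)]
  have h0 : h 0 = 0 := by
    rw [hh]; simp [Q_zero_outside (A := A) (B := B) hsupp n (by norm_num : (0:ℝ) ∉ Icc (1:ℝ) 2)]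
  have hzero : ∀ x : ℝ, x ∉ Ioc (0:ℝ) 3 → gE W A B (n+1) x + gE W A B n x = 0 := by
    intro x hx
    have hxI : x ∉ Icc (1:ℝ) 2 := by
      intro hmem
      exact hx ⟨lt_of_lt_of_le one_pos hmem.1, le_trans hmem.2 (by norm_num)⟩
    rw [gE_support (A := A) (B := B) hsupp (n+1) hxI, gE_support (A := A) (B := B) hsupp n hxI,
      add_zero]
  have hfull : ∫ s : ℝ, (gE W A B (n+1) s + gE W A B n s) = 0 := by
    rw [← setIntegral_eq_integral_of_forall_compl_eq_zero hzero,
      ← intervalIntegral.integral_of_le (by norm_num : (0:ℝ) ≤ 3), h03, h3, h0, sub_zero]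
  rw [integral_add int1 int2] at hfull
  exact eq_neg_of_add_eq_zero_left hfull
lemma integral_iter (hW : ContDiff ℝ (↑(⊤:ℕ∞)) W) (hsupp : support W ⊆ Icc 1 2)
    (hll : ∀ s ∈ Icc (1:ℝ) 2, ll A B s ≠ 0) (n : ℕ) :
    ∫ t : ℝ, gE W A B n t = (-1:ℂ) ^ n * ∫ t : ℝ, gE W A B 0 t := by
  induction n with
  | zero => simp
  | succ n ih =>
    rw [integral_step hW hsupp hll n, ih, pow_succ]
    ring

lemma gE_zero_eq (t : ℝ) : gE W A B 0 t = W t * E A B t := by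
  simp [gE, show Q W A B 0 = W from rfl]

lemma norm_E (t : ℝ) : ‖E A B t‖ = 1 := norm_e _

lemma norm_c : ‖(2 * (Real.pi:ℂ) * Complex.I)‖ = 2 * Real.pi := by
  simp [map_mul, abs_of_pos Real.pi_pos]

lemma master (W : ℝ → ℂ) (hW : ContDiff ℝ (↑(⊤:ℕ∞)) W) (hsupp : support W ⊆ Icc 1 2) (j : ℕ) :
    ∃ C : ℝ, 0 < C ∧ ∀ A B M : ℝ, 0 < M → |B| ≤ M / 2 →
      (∀ t ∈ Icc (1:ℝ) 2, M ≤ ‖ll A B t‖) → (∀ t ∈ Icc (1:ℝ) 2, ‖ll A B t‖ ≤ 3 * M) →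
      ‖∫ t : ℝ, W t * E A B t‖ ≤ C / M ^ j := by
  obtain ⟨C, hC0, hC⟩ := Q_bound W hW j 0
  refine ⟨C, hC0, ?_⟩
  intro A B M hM hB hlow h3
  have hll : ∀ t ∈ Icc (1:ℝ) 2, ll A B t ≠ 0 := by
    intro t ht h
    have h1 := hlow t ht
    rw [h, norm_zero] at h1
    linarith
  have h1 : ∫ t : ℝ, W t * E A B t = ∫ t : ℝ, gE W A B 0 t := by
    refine integral_congr_ae (Filter.Eventually.of_forall fun t => ?_)
    rw [gE_zero_eq]
  have h2 := integral_iter (A := A) (B := B) hW hsupp hll j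
  have hnorm_eq : ‖∫ t : ℝ, gE W A B 0 t‖ = ‖∫ t : ℝ, gE W A B j t‖ := by
    rw [h2, norm_mul, norm_pow, norm_neg, norm_one, one_pow, one_mul]
  have hcnorm : (1:ℝ) ≤ ‖(2 * (Real.pi:ℂ) * Complex.I)‖ := by
    rw [norm_c]; nlinarith [Real.pi_gt_three]
  have hpt : ∀ t ∈ Icc (1:ℝ) 2, ‖gE W A B j t‖ ≤ C / M ^ j := by
    intro t ht
    have hQ : ‖Q W A B j t‖ ≤ C * M ^ j := by
      have := hC A B M hM hB h3 t ht
      rwa [iteratedDeriv_zero] at this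
    have a1 : M ^ (2*j) ≤ ‖ll A B t‖ ^ (2*j) := pow_le_pow_left₀ hM.le (hlow t ht) _
    have a2 : (1:ℝ) ≤ ‖(2 * (Real.pi:ℂ) * Complex.I)‖ ^ j := by
      calc (1:ℝ) = 1 ^ j := (one_pow j).symm
        _ ≤ _ := pow_le_pow_left₀ (by norm_num) hcnorm j
    have hden : M ^ (2*j) ≤ ‖(2 * (Real.pi:ℂ) * Complex.I) ^ j * (ll A B t) ^ (2*j)‖ := by
      rw [norm_mul, norm_pow, norm_pow]
      calc M ^ (2*j) = 1 * M ^ (2*j) := (one_mul _).symm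
        _ ≤ _ := mul_le_mul a2 a1 (by positivity) (by positivity)
    have hval : ‖gE W A B j t‖ = ‖Q W A B j t‖ * 1 /
        ‖(2 * (Real.pi:ℂ) * Complex.I) ^ j * (ll A B t) ^ (2*j)‖ := by
      rw [gE, norm_div, norm_mul, norm_E]
    rw [hval]
    calc ‖Q W A B j t‖ * 1 / ‖(2 * (Real.pi:ℂ) * Complex.I) ^ j * (ll A B t) ^ (2*j)‖
        ≤ (C * M ^ j) / M ^ (2*j) := by
          apply div_le_div₀ (by positivity) (by rw [mul_one]; exact hQ) (by positivity) hden
      _ = C / M ^ j := by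
          rw [div_eq_div_iff (by positivity) (by positivity), two_mul, pow_add]
          ring
  rw [h1, hnorm_eq,
    ← setIntegral_eq_integral_of_forall_compl_eq_zero
      (fun x hx => gE_support (A := A) (B := B) hsupp j hx)]
  have hvol : volume (Icc (1:ℝ) 2) < ⊤ := by
    rw [Real.volume_Icc]; exact ENNReal.ofReal_lt_top
  calc ‖∫ t in Icc (1:ℝ) 2, gE W A B j t‖ ≤ (C / M ^ j) * (volume (Icc (1:ℝ) 2)).toReal :=
        norm_setIntegral_le_of_norm_le_const hvol hpt
    _ = C / M ^ j := by rw [Real.volume_Icc]; norm_num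

end Osc

theorem oscillatory_integral_decay (W : ℝ → ℂ) (hW : ContDiff ℝ (⊤ : ℕ∞) W)
    (hsupp : Function.support W ⊆ Set.Icc 1 2) :
    ∀ j : ℕ, ∃ C : ℝ, 0 < C ∧ ∀ X : ℝ, 1 ≤ X → ∀ u : ℝ, ∀ q : ℕ, 0 < q →
      ∀ m₁ : ℤ, 8 * (1 + |u|) ≤ |(m₁ : ℝ)| →
        ‖∫ t : ℝ, W t *
            e (-((m₁ : ℝ) * X ^ ((1 : ℝ) / 2) * t) / q -
              u * X ^ ((1 : ℝ) / 2) * t ^ 2 / q)‖ ≤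
          C * ((q : ℝ) / (|(m₁ : ℝ)| * X ^ ((1 : ℝ) / 2))) ^ j := by
  intro j
  obtain ⟨C, hC0, hC⟩ := Osc.master W (hW.of_le (by simp)) hsupp j
  refine ⟨C * 2 ^ j, by positivity, ?_⟩
  intro X hX u q hq m₁ hm
  set s : ℝ := X ^ ((1 : ℝ) / 2) with hs
  have hs1 : (1:ℝ) ≤ s := by
    rw [hs]
    calc (1:ℝ) = (1:ℝ) ^ ((1:ℝ)/2) := (Real.one_rpow _).symm
      _ ≤ X ^ ((1:ℝ)/2) := Real.rpow_le_rpow (by norm_num) hX (by norm_num)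
  have hs0 : (0:ℝ) < s := lt_of_lt_of_le one_pos hs1
  have hq0 : (0:ℝ) < (q:ℝ) := by exact_mod_cast hq
  have hm8 : (8:ℝ) ≤ |(m₁:ℝ)| := le_trans (by nlinarith [abs_nonneg u]) hm
  have hm0 : (0:ℝ) < |(m₁:ℝ)| := by linarith
  have h8u : 8 * |u| ≤ |(m₁:ℝ)| := by nlinarith [abs_nonneg u]
  set A : ℝ := -((m₁:ℝ) * s) / q with hA
  set B : ℝ := -(2 * u * s) / q with hB
  set M : ℝ := |(m₁:ℝ)| * s / (2 * q) with hM
  have hM0 : 0 < M := by rw [hM]; positivity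
  have hBabs : |B| = 2 * |u| * s / q := by
    rw [hB, abs_div, abs_neg, abs_mul, abs_mul, abs_of_pos hs0, abs_of_pos hq0]
    norm_num
  have hBle : |B| ≤ M / 2 := by
    have hM2 : M / 2 = |(m₁:ℝ)| * s / (4 * q) := by rw [hM]; ring
    rw [hBabs, hM2, div_le_div_iff₀ hq0 (by positivity)]
    nlinarith [mul_le_mul_of_nonneg_right
      (mul_le_mul_of_nonneg_right h8u hs0.le) hq0.le]
  have hAabs : |A| = 2 * M := by
    rw [hA, hM, abs_div, abs_neg, abs_mul, abs_of_pos hs0, abs_of_pos hq0]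
    field_simp
  have hllval : ∀ t : ℝ, ‖Osc.ll A B t‖ = |A + B * t| := fun t => by
    rw [Osc.ll, Complex.norm_real, Real.norm_eq_abs]
  have hBt : ∀ t ∈ Icc (1:ℝ) 2, |B * t| ≤ M := by
    intro t ht
    rw [abs_mul]
    have h1 : |t| ≤ 2 := by rw [abs_of_pos (lt_of_lt_of_le one_pos ht.1)]; exact ht.2
    calc |B| * |t| ≤ (M/2) * 2 := mul_le_mul hBle h1 (abs_nonneg t) (by positivity)
      _ = M := by ring
  have hlow : ∀ t ∈ Icc (1:ℝ) 2, M ≤ ‖Osc.ll A B t‖ := by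
    intro t ht
    rw [hllval t]
    have h1 := hBt t ht
    have h2 : |A| - |B * t| ≤ |A + B * t| := by
      have := abs_sub_abs_le_abs_sub A (-(B * t))
      simp only [sub_neg_eq_add, abs_neg] at this
      linarith [this]
    linarith [hAabs ▸ h2]
  have h3 : ∀ t ∈ Icc (1:ℝ) 2, ‖Osc.ll A B t‖ ≤ 3 * M := by
    intro t ht
    rw [hllval t]
    have h1 := hBt t ht
    have h2 : |A + B * t| ≤ |A| + |B * t| := abs_add_le _ _
    linarith [hAabs ▸ h2]
  have hmatch : ∀ t : ℝ,
      W t * e (-((m₁:ℝ) * s * t) / q - u * s * t ^ 2 / q) = W t * Osc.E A B t := by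
    intro t
    congr 1
    rw [Osc.E]
    congr 1
    rw [hA, hB]
    field_simp
    ring
  have hint : ∫ t : ℝ, W t * e (-((m₁:ℝ) * s * t) / q - u * s * t ^ 2 / q)
      = ∫ t : ℝ, W t * Osc.E A B t :=
    integral_congr_ae (Filter.Eventually.of_forall hmatch)
  rw [hint]
  have hbound := hC A B M hM0 hBle hlow h3
  have hMinv : (1:ℝ) / M = 2 * ((q:ℝ) / (|(m₁:ℝ)| * s)) := by
    rw [hM]; field_simp
  have hMeq : C / M ^ j = C * 2 ^ j * ((q:ℝ) / (|(m₁:ℝ)| * s)) ^ j := by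
    calc C / M ^ j = C * (1 / M) ^ j := by rw [one_div_pow, mul_one_div]
      _ = C * (2 * ((q:ℝ) / (|(m₁:ℝ)| * s))) ^ j := by rw [hMinv]
      _ = C * 2 ^ j * ((q:ℝ) / (|(m₁:ℝ)| * s)) ^ j := by rw [mul_pow]; ring
  calc ‖∫ t : ℝ, W t * Osc.E A B t‖ ≤ C / M ^ j := hbound
    _ = C * 2 ^ j * ((q:ℝ) / (|(m₁:ℝ)| * s)) ^ j := hMeq
end
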